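/- Two-sided barrier: Assume in addition that there exists s_- < 0 such that F(t) > 0 for t ∈ (s_-, 0) and F(t) ≤ 0 for t ≤ s_-. Let 0 < R ≤ ∞. Then every solution u of the boundary-value problem (⋆)&(BC) on (0,R) (with no sign assumption) satisfies s_- < u(r) < s_+ for all r ∈ (0,R). -/

import Mathlib

open Set Filter Topology MeasureTheory
open scoped ENNReal NNReal

/-- `γ₊ = ((1-p) + √((p-1)² + 4q))/2`, the positive root of `γ² + (p-1)γ - q = 0`. -/
noncomputable def gammaPlus (p q : ℝ) : ℝ :=
  ((1 - p) + Real.sqrt ((p - 1) ^ 2 + 4 * q)) / 2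

/-- Condition (condF) on the nonlinearity `F` (with `0 < sp` recorded separately). -/
def CondF (F : ℝ → ℝ) (sp : ℝ) : Prop :=
  ContDiff ℝ 1 F ∧ F 0 = 0 ∧ F sp = 0 ∧
    (∀ t ∈ Set.Ioo 0 sp, F t < 0) ∧ (∀ t, sp < t → 0 < F t) ∧ 0 < deriv F sp

/-- The ODE (⋆) `u'' + (p/r) u' - (q/r²) u = F(u)` holds at the point `r`. -/
def ODEAt (p q : ℝ) (F : ℝ → ℝ) (u : ℝ → ℝ) (r : ℝ) : Prop :=
  deriv (deriv u) r + (p / r) * deriv u r - (q / r ^ 2) * u r = F (u r)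

/-- `u` is a solution of the boundary-value problem (⋆)&(BC) on `(0,R)` with `R ∈ (0,∞]`:
`u` is continuous on `[0,R)`, `C²` on `(0,R)`, satisfies (⋆) pointwise on `(0,R)`,
`u(0) = 0`, and `u(r) → s₊` as `r → R⁻` (for `R < ∞`) resp. `r → ∞` (for `R = ∞`). -/
def IsBVPSolution (p q : ℝ) (F : ℝ → ℝ) (sp : ℝ) (R : ℝ≥0∞) (u : ℝ → ℝ) : Prop :=
  ContinuousOn u {r : ℝ | 0 ≤ r ∧ ENNReal.ofReal r < R} ∧
    (∀ r : ℝ, 0 < r → ENNReal.ofReal r < R → ContDiffAt ℝ 2 u r) ∧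
    (∀ r : ℝ, 0 < r → ENNReal.ofReal r < R → ODEAt p q F u r) ∧
    u 0 = 0 ∧
    (∀ R' : ℝ, 0 < R' → R = ENNReal.ofReal R' →
      Filter.Tendsto u (nhdsWithin R' (Set.Iio R')) (nhds sp)) ∧
    (R = ⊤ → Filter.Tendsto u Filter.atTop (nhds sp))

/-!
Maximum principle. At an interior local maximum `r` of `u` we have `u'(r) = 0` and
`u''(r) ≤ 0`, so (⋆) gives `F(u(r)) ≤ -(q/r²) u(r) < 0` whenever `u(r) > 0`. If `u` reached
`s₊` somewhere in `(0,R)`, then, since `u(0) = 0` and `u → s₊` at `R`, it would have an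
interior local maximum with value `≥ s₊`, where `F ≥ 0`. The lower bound is the same
argument for `-u`, which solves (⋆) with nonlinearity `t ↦ -F(-t)` and boundary value `-s₊`.
-/

theorem IsLocalMax.deriv_deriv_nonpos {f : ℝ → ℝ} {a : ℝ} (h : IsLocalMax f a)
    (hc : ContinuousAt f a) : deriv (deriv f) a ≤ 0 := by
  by_contra! hpos
  have hmin := isLocalMin_of_deriv_deriv_pos hpos h.deriv_eq_zero hc
  have hconst : f =ᶠ[𝓝 a] fun _ => f a := by
    filter_upwards [h, hmin] with x hmax hmin using le_antisymm hmax hmin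
  have hzero := hconst.deriv.deriv_eq
  simp only [deriv_const'] at hzero
  linarith

theorem ODEAt.neg {p q : ℝ} {F u : ℝ → ℝ} {r : ℝ} (h : ODEAt p q F u r) :
    ODEAt p q (fun t => -F (-t)) (-u) r := by
  have hderiv2 : deriv (deriv (-u)) r = -deriv (deriv u) r := by
    rw [deriv.neg']
    exact deriv.neg
  unfold ODEAt at h ⊢
  rw [hderiv2, deriv.neg]
  simp only [Pi.neg_apply, neg_neg]
  linarith

theorem ODEAt.apply_neg_of_isLocalMax {p q : ℝ} {G u : ℝ → ℝ} {r : ℝ} (hq : 0 < q) (hr : 0 < r)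
    (hode : ODEAt p q G u r) (hmax : IsLocalMax u r) (hc : ContinuousAt u r) (hu : 0 < u r) :
    G (u r) < 0 := by
  have hu'' := hmax.deriv_deriv_nonpos hc
  have hqu : 0 < q / r ^ 2 * u r := by positivity
  unfold ODEAt at hode
  rw [hmax.deriv_eq_zero] at hode
  linarith

theorem IsBVPSolution.neg {p q sp : ℝ} {F : ℝ → ℝ} {R : ℝ≥0∞} {u : ℝ → ℝ}
    (hu : IsBVPSolution p q F sp R u) :
    IsBVPSolution p q (fun t => -F (-t)) (-sp) R (-u) := by
  obtain ⟨hcont, hC2, hode, h0, hbc, hbcTop⟩ := hu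
  exact ⟨hcont.neg, fun r hr hrR => (hC2 r hr hrR).neg, fun r hr hrR => (hode r hr hrR).neg,
    by simp [h0], fun R' hR' hRR' => (hbc R' hR' hRR').neg, fun hR => (hbcTop hR).neg⟩

theorem isOpen_setOf_pos_ofReal_lt (R : ℝ≥0∞) : IsOpen {r : ℝ | 0 < r ∧ ENNReal.ofReal r < R} :=
  isOpen_Ioi.inter (isOpen_Iio.preimage ENNReal.continuous_ofReal)

namespace IsBVPSolution

variable {p q l : ℝ} {G u : ℝ → ℝ} {R : ℝ≥0∞}

theorem exists_forall_lt_of_lt (hu : IsBVPSolution p q G l R u) {m : ℝ} (hlm : l < m)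
    {r₀ : ℝ} (hr₀R : ENNReal.ofReal r₀ < R) :
    ∃ T, r₀ ≤ T ∧ ENNReal.ofReal T < R ∧ ∀ r, T < r → ENNReal.ofReal r < R → u r < m := by
  obtain ⟨-, -, -, -, hbc, hbcTop⟩ := hu
  by_cases hR : R = ⊤
  · obtain ⟨T, hT⟩ := eventually_atTop.1 ((hbcTop hR).eventually (eventually_lt_nhds hlm))
    refine ⟨max r₀ T, le_max_left _ _, hR ▸ ENNReal.ofReal_lt_top, fun r hr _ => hT r ?_⟩
    exact (le_max_right _ _).trans hr.le
  · have hRpos : 0 < R.toReal := ENNReal.toReal_pos (pos_of_gt hr₀R).ne' hR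
    have hRR : R = ENNReal.ofReal R.toReal := (ENNReal.ofReal_toReal hR).symm
    have hlt_iff : ∀ r, ENNReal.ofReal r < R ↔ r < R.toReal := fun r => by
      rw [hRR, ENNReal.ofReal_lt_ofReal_iff hRpos, ← hRR]
    obtain ⟨T, hTR, hT⟩ := mem_nhdsLT_iff_exists_Ioo_subset.1
      ((hbc _ hRpos hRR).eventually (eventually_lt_nhds hlm))
    refine ⟨max r₀ T, le_max_left _ _, (hlt_iff _).2 (max_lt ((hlt_iff _).1 hr₀R) hTR), ?_⟩
    exact fun r hr hrR => hT ⟨(le_max_right _ _).trans_lt hr, (hlt_iff r).1 hrR⟩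

theorem exists_isLocalMax_ge (hu : IsBVPSolution p q G l R u) {r₀ : ℝ} (hr₀ : 0 ≤ r₀)
    (hr₀R : ENNReal.ofReal r₀ < R) (hpos : 0 < u r₀) (hl : l < u r₀) :
    ∃ r, 0 < r ∧ ENNReal.ofReal r < R ∧ IsLocalMax u r ∧ u r₀ ≤ u r := by
  obtain ⟨T, hr₀T, hTR, hT⟩ := hu.exists_forall_lt_of_lt (m := (l + u r₀) / 2) (by linarith) hr₀R
  have hIcc : Icc 0 T ⊆ {r : ℝ | 0 ≤ r ∧ ENNReal.ofReal r < R} :=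
    fun x hx => ⟨hx.1, (ENNReal.ofReal_le_ofReal hx.2).trans_lt hTR⟩
  obtain ⟨r, hr, hmaxOn⟩ := isCompact_Icc.exists_isMaxOn (nonempty_Icc.2 (hr₀.trans hr₀T))
    (hu.1.mono hIcc)
  have hr₀r : u r₀ ≤ u r := hmaxOn ⟨hr₀, hr₀T⟩
  have hr_pos : 0 < r := by
    refine hr.1.lt_of_ne fun h => ?_
    rw [← h, hu.2.2.2.1] at hr₀r
    linarith
  have hrR : ENNReal.ofReal r < R := (hIcc hr).2
  refine ⟨r, hr_pos, hrR, ?_, hr₀r⟩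
  filter_upwards [(isOpen_setOf_pos_ofReal_lt R).mem_nhds ⟨hr_pos, hrR⟩] with x hx
  rcases le_or_gt x T with hxT | hxT
  · exact hmaxOn ⟨hx.1.le, hxT⟩
  · linarith [hT x hxT hx.2]

theorem lt_of_nonneg_on_Ici (hu : IsBVPSolution p q G l R u) (hq : 0 < q) {b : ℝ} (hb : 0 < b)
    (hl : l ≤ b) (hG : ∀ t, b ≤ t → 0 ≤ G t) :
    ∀ r, 0 < r → ENNReal.ofReal r < R → u r < b := by
  intro r₀ hr₀ hr₀R
  by_contra! hbr₀
  obtain ⟨r, hr, hrR, hmax, hbr⟩ :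
      ∃ r, 0 < r ∧ ENNReal.ofReal r < R ∧ IsLocalMax u r ∧ b ≤ u r := by
    by_cases hex : ∃ r, 0 < r ∧ ENNReal.ofReal r < R ∧ b < u r
    · obtain ⟨r₁, hr₁, hr₁R, hbr₁⟩ := hex
      obtain ⟨r, hr, hrR, hmax, hr₁r⟩ :=
        hu.exists_isLocalMax_ge hr₁.le hr₁R (by linarith) (by linarith)
      exact ⟨r, hr, hrR, hmax, by linarith⟩
    · push Not at hex
      refine ⟨r₀, hr₀, hr₀R, ?_, hbr₀⟩
      filter_upwards [(isOpen_setOf_pos_ofReal_lt R).mem_nhds ⟨hr₀, hr₀R⟩] with x hx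
      linarith [hex x hx.1 hx.2]
  have hc : ContinuousAt u r := (hu.2.1 r hr hrR).continuousAt
  linarith [hG _ hbr, (hu.2.2.1 r hr hrR).apply_neg_of_isLocalMax hq hr hmax hc (by linarith)]

end IsBVPSolution

theorem stmt16_general (p q sp : ℝ) (hq : 0 < q) (hsp : 0 < sp)
    (F : ℝ → ℝ) (hF : CondF F sp)
    (sm : ℝ) (hsm : sm < 0)
    (hFneg : ∀ t ≤ sm, F t ≤ 0)
    (R : ℝ≥0∞) (u : ℝ → ℝ)
    (hu : IsBVPSolution p q F sp R u) :
    ∀ r : ℝ, 0 < r → ENNReal.ofReal r < R → sm < u r ∧ u r < sp := by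
  obtain ⟨-, -, hFsp, -, hFgt, -⟩ := hF
  intro r hr hrR
  constructor
  · have hneg := hu.neg.lt_of_nonneg_on_Ici hq (b := -sm) (by linarith) (by linarith)
      (fun t ht => neg_nonneg.2 (hFneg _ (by linarith))) r hr hrR
    simp only [Pi.neg_apply] at hneg
    linarith
  · exact hu.lt_of_nonneg_on_Ici hq hsp le_rfl
      (fun t ht => ht.eq_or_lt.elim (fun h => (h ▸ hFsp).ge) (fun h => (hFgt t h).le)) r hr hrR

/-- two-sided barrier: any solution of (⋆)&(BC) satisfies `s₋ < u < s₊`. -/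
theorem stmt16 (p q sp : ℝ) (hp : 0 ≤ p) (hq : 0 < q) (hsp : 0 < sp)
    (F : ℝ → ℝ) (hF : CondF F sp)
    (sm : ℝ) (hsm : sm < 0)
    (hFpos : ∀ t ∈ Set.Ioo sm 0, 0 < F t)
    (hFneg : ∀ t ≤ sm, F t ≤ 0)
    (R : ℝ≥0∞) (hR : 0 < R) (u : ℝ → ℝ)
    (hu : IsBVPSolution p q F sp R u) :
    ∀ r : ℝ, 0 < r → ENNReal.ofReal r < R → sm < u r ∧ u r < sp :=
  stmt16_general p q sp hq hsp F hF sm hsm hFneg R u hu
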